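/- (Optimality of the constant 0.75) For every 0 < r < 3/4, λ₁(r) = (1 − 1/r) − √(1/r² − 1/r) < −1; consequently, there exists an initial point u⁰ ∈ ℝ² such that the sequence defined by u^{k+1} = P(r)·uᵏ (i.e., uᵏ = P(r)ᵏ·u⁰) is unbounded. Hence the CP-PPA applied to min{0·x : x = 0, x ∈ ℝ} with s = 1 is divergent for every 0 < r < 3/4. -/

import Mathlib

open Matrix

/-- The iteration matrix of CP-PPA with `s = 1` applied to `min{0·x : x = 0, x ∈ ℝ}`. -/
noncomputable def Pmat (r : ℝ) : Matrix (Fin 2) (Fin 2) ℝ :=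
  !![1, 1 / r; -1, 1 - 2 / r]

noncomputable def lam1 (r : ℝ) : ℝ := (1 - 1 / r) - Real.sqrt (1 / r ^ 2 - 1 / r)

/-!
`λ₁(r)` is a root of the characteristic polynomial of `P(r)`, with eigenvector `(1, r(λ₁ - 1))`,
so the iterates from that point are `λ₁ᵏ (1, r(λ₁ - 1))`. With `t = 1/r > 4/3` the inequality
`λ₁ < -1` reads `√(t² - t) > 2 - t`, which after squaring is `3t > 4`.
-/

namespace Matrix

variable {n : Type*} [Fintype n] [DecidableEq n]

theorem pow_mulVec_of_mulVec_eq_smul {R : Type*} [CommSemiring R] {A : Matrix n n R}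
    {v : n → R} {μ : R} (h : A *ᵥ v = μ • v) (k : ℕ) : (A ^ k) *ᵥ v = μ ^ k • v := by
  induction k with
  | zero => simp
  | succ k ih =>
    rw [pow_succ', ← mulVec_mulVec, ih, mulVec_smul, h, smul_smul, pow_succ]

theorem not_bounded_norm_pow_mulVec_of_mulVec_eq_smul {𝕜 : Type*} [NormedField 𝕜]
    {A : Matrix n n 𝕜} {v : n → 𝕜} {μ : 𝕜} (h : A *ᵥ v = μ • v) (hv : v ≠ 0) (hμ : 1 < ‖μ‖) :
    ¬ ∃ C : ℝ, ∀ k : ℕ, ‖(A ^ k) *ᵥ v‖ ≤ C := by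
  rintro ⟨C, hC⟩
  have hv_pos : 0 < ‖v‖ := norm_pos_iff.2 hv
  obtain ⟨k, hk⟩ := pow_unbounded_of_one_lt (C / ‖v‖) hμ
  have hk : C < ‖μ‖ ^ k * ‖v‖ := (div_lt_iff₀ hv_pos).1 hk
  have := hC k
  rw [pow_mulVec_of_mulVec_eq_smul h, norm_smul, norm_pow] at this
  linarith

end Matrix

theorem Pmat_mulVec_of_sq_eq {r μ : ℝ} (hr : r ≠ 0) (hμ : μ ^ 2 = (2 - 2 / r) * μ - (1 - 1 / r)) :
    Pmat r *ᵥ ![1, r * (μ - 1)] = μ • ![1, r * (μ - 1)] := by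
  ext i
  fin_cases i <;>
    simp only [Pmat, mulVec, dotProduct, Fin.sum_univ_two, of_apply, cons_val', cons_val_zero,
      cons_val_one, cons_val_fin_one, Pi.smul_apply, smul_eq_mul, Fin.zero_eta, Fin.mk_one]
  · field_simp
    ring
  · field_simp at hμ ⊢
    linear_combination -hμ

theorem one_div_sq_sub_one_div (r : ℝ) : 1 / r ^ 2 - 1 / r = 1 / r * (1 / r - 1) := by ring

theorem lam1_sq {r : ℝ} (hr : r ≤ 1) : lam1 r ^ 2 = (2 - 2 / r) * lam1 r - (1 - 1 / r) := by
  have hdisc : 0 ≤ 1 / r ^ 2 - 1 / r := by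
    rw [one_div_sq_sub_one_div]
    rcases le_or_gt r 0 with h | h
    · have : 1 / r ≤ 0 := one_div_nonpos.2 h
      exact mul_nonneg_of_nonpos_of_nonpos this (by linarith)
    · have : 1 ≤ 1 / r := by rw [le_div_iff₀ h]; linarith
      exact mul_nonneg (by positivity) (by linarith)
  unfold lam1
  linear_combination Real.sq_sqrt hdisc

theorem lam1_lt_neg_one {r : ℝ} (hr0 : 0 < r) (hr : r < 3 / 4) : lam1 r < -1 := by
  have ht : 4 / 3 < 1 / r := by rw [lt_div_iff₀ hr0]; linarith
  have hsqrt : 2 - 1 / r < Real.sqrt (1 / r ^ 2 - 1 / r) := by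
    rw [one_div_sq_sub_one_div]
    rcases le_or_gt (2 - 1 / r) 0 with h | h
    · exact h.trans_lt (Real.sqrt_pos.2 (mul_pos (by positivity) (by linarith)))
    · rw [Real.lt_sqrt h.le]
      nlinarith
  unfold lam1
  linarith

/-- Optimality of the constant 0.75: for every `0 < r < 3/4`, `λ₁(r) < −1` and the
CP-PPA iteration `u^{k+1} = P(r) uᵏ` is divergent from some initial point. -/
theorem stmt_17 (r : ℝ) (hr0 : 0 < r) (hr : r < 3 / 4) :
    lam1 r < -1 ∧
    ∃ u0 : Fin 2 → ℝ, ¬ ∃ C : ℝ, ∀ k : ℕ, ‖((Pmat r) ^ k).mulVec u0‖ ≤ C := by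
  have hlam := lam1_lt_neg_one hr0 hr
  refine ⟨hlam, ![1, r * (lam1 r - 1)], ?_⟩
  refine not_bounded_norm_pow_mulVec_of_mulVec_eq_smul
    (Pmat_mulVec_of_sq_eq hr0.ne' (lam1_sq (by linarith))) ?_ ?_
  · intro h
    simpa using congrFun h 0
  · rw [Real.norm_eq_abs, abs_of_neg (by linarith)]
    linarith
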